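/- Let $\{T_\alpha : M \to A\}_{\alpha\in\Omega}$ be an $H$-twisted $\mathcal{O}$-operator family. Then the linear map $T : M \otimes k\Omega \to A \otimes k\Omega$ defined by $T(u\otimes\alpha) = T_\alpha(u)\otimes\alpha$ is an $\widehat{H}$-twisted $\mathcal{O}$-operator, where $\widehat{H}(a\otimes\alpha, b\otimes\beta) = H(a,b)\otimes\alpha\beta$. -/

import Mathlib

theorem Finsupp.bilinear_ext {R Ω M N P : Type*} [CommSemiring R]
    [AddCommMonoid M] [Module R M] [AddCommMonoid N] [Module R N]
    [AddCommMonoid P] [Module R P]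
    ⦃f g : (Ω →₀ M) →ₗ[R] (Ω →₀ N) →ₗ[R] P⦄
    (h : ∀ α β u v, f (single α u) (single β v) = g (single α u) (single β v)) :
    f = g :=
  lhom_ext fun α u => lhom_ext fun β v => h α β u v

theorem twisted_O_operator_family_induces_twisted_O_operator_general
    {k Ω A M : Type*} [Field k] [Semigroup Ω]
    [NonUnitalRing A] [Module k A]
    [AddCommGroup M] [Module k M]
    (l : A →ₗ[k] M →ₗ[k] M) (r : M →ₗ[k] A →ₗ[k] M)
    (H : A →ₗ[k] A →ₗ[k] M)
    (T : Ω → M →ₗ[k] A)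
    (hT : ∀ (α β : Ω) (u v : M),
      T α u * T β v
        = T (α * β) (l (T α u) v + r u (T β v) + H (T α u) (T β v)))
    (bul : (Ω →₀ A) →ₗ[k] (Ω →₀ A) →ₗ[k] (Ω →₀ A))
    (hbul : ∀ (α β : Ω) (a b : A),
      bul (Finsupp.single α a) (Finsupp.single β b) = Finsupp.single (α * β) (a * b))
    (L : (Ω →₀ A) →ₗ[k] (Ω →₀ M) →ₗ[k] (Ω →₀ M))
    (hL : ∀ (α β : Ω) (a : A) (u : M),
      L (Finsupp.single α a) (Finsupp.single β u) = Finsupp.single (α * β) (l a u))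
    (Rr : (Ω →₀ M) →ₗ[k] (Ω →₀ A) →ₗ[k] (Ω →₀ M))
    (hRr : ∀ (β α : Ω) (u : M) (a : A),
      Rr (Finsupp.single β u) (Finsupp.single α a) = Finsupp.single (β * α) (r u a))
    (Hhat : (Ω →₀ A) →ₗ[k] (Ω →₀ A) →ₗ[k] (Ω →₀ M))
    (hHhat : ∀ (α β : Ω) (a b : A),
      Hhat (Finsupp.single α a) (Finsupp.single β b) = Finsupp.single (α * β) (H a b))
    (Tt : (Ω →₀ M) →ₗ[k] (Ω →₀ A))
    (hTt : ∀ (α : Ω) (u : M), Tt (Finsupp.single α u) = Finsupp.single α (T α u)) :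
    ∀ x y : Ω →₀ M,
      bul (Tt x) (Tt y)
        = Tt (L (Tt x) y + Rr x (Tt y) + Hhat (Tt x) (Tt y)) := by
  have bilinear_eq : bul.compl₁₂ Tt Tt
      = (L.comp Tt + Rr.compl₂ Tt + Hhat.compl₁₂ Tt Tt).compr₂ Tt := by
    refine Finsupp.bilinear_ext fun α β u v => ?_
    simp only [LinearMap.compl₁₂_apply, LinearMap.compr₂_apply, LinearMap.add_apply,
      LinearMap.comp_apply, LinearMap.compl₂_apply]
    rw [hTt, hTt, hbul, hL, hRr, hHhat, ← Finsupp.single_add, ← Finsupp.single_add, hTt, hT]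
  intro x y
  simpa using LinearMap.congr_fun₂ bilinear_eq x y

/-- An `H`-twisted O-operator family `{T_α : M → A}` induces an
`Ĥ`-twisted O-operator `T : M ⊗ kΩ → A ⊗ kΩ`, `T(u⊗α) = T_α(u)⊗α`.  Here the tensor
products are modelled as `Ω →₀ A` and `Ω →₀ M` (with `single α a ↔ a ⊗ α`), with the
induced multiplication, bimodule actions (note `(u⊗β)•(a⊗α) = u·a ⊗ βα`) and
2-cocycle `Ĥ(a⊗α, b⊗β) = H(a,b)⊗αβ`. -/
theorem twisted_O_operator_family_induces_twisted_O_operator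
    {k Ω A M : Type*} [Field k] [Semigroup Ω]
    [NonUnitalRing A] [Module k A] [SMulCommClass k A A] [IsScalarTower k A A]
    [AddCommGroup M] [Module k M]
    (l : A →ₗ[k] M →ₗ[k] M) (r : M →ₗ[k] A →ₗ[k] M)
    (hll : ∀ (a b : A) (u : M), l (a * b) u = l a (l b u))
    (hlr : ∀ (a : A) (u : M) (b : A), r (l a u) b = l a (r u b))
    (hrr : ∀ (u : M) (a b : A), r (r u a) b = r u (a * b))
    (H : A →ₗ[k] A →ₗ[k] M)
    (hH : ∀ a b c : A, l a (H b c) - H (a * b) c + H a (b * c) - r (H a b) c = 0)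
    (T : Ω → M →ₗ[k] A)
    (hT : ∀ (α β : Ω) (u v : M),
      T α u * T β v
        = T (α * β) (l (T α u) v + r u (T β v) + H (T α u) (T β v)))
    (bul : (Ω →₀ A) →ₗ[k] (Ω →₀ A) →ₗ[k] (Ω →₀ A))
    (hbul : ∀ (α β : Ω) (a b : A),
      bul (Finsupp.single α a) (Finsupp.single β b) = Finsupp.single (α * β) (a * b))
    (L : (Ω →₀ A) →ₗ[k] (Ω →₀ M) →ₗ[k] (Ω →₀ M))
    (hL : ∀ (α β : Ω) (a : A) (u : M),
      L (Finsupp.single α a) (Finsupp.single β u) = Finsupp.single (α * β) (l a u))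
    (Rr : (Ω →₀ M) →ₗ[k] (Ω →₀ A) →ₗ[k] (Ω →₀ M))
    (hRr : ∀ (β α : Ω) (u : M) (a : A),
      Rr (Finsupp.single β u) (Finsupp.single α a) = Finsupp.single (β * α) (r u a))
    (Hhat : (Ω →₀ A) →ₗ[k] (Ω →₀ A) →ₗ[k] (Ω →₀ M))
    (hHhat : ∀ (α β : Ω) (a b : A),
      Hhat (Finsupp.single α a) (Finsupp.single β b) = Finsupp.single (α * β) (H a b))
    (Tt : (Ω →₀ M) →ₗ[k] (Ω →₀ A))
    (hTt : ∀ (α : Ω) (u : M), Tt (Finsupp.single α u) = Finsupp.single α (T α u)) :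
    ∀ x y : Ω →₀ M,
      bul (Tt x) (Tt y)
        = Tt (L (Tt x) y + Rr x (Tt y) + Hhat (Tt x) (Tt y)) :=
  twisted_O_operator_family_induces_twisted_O_operator_general l r H T hT bul hbul L hL Rr hRr Hhat
    hHhat Tt hTt
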